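/- arXiv:1710.03989 — 5 statements merged into one kernel-verified Lean document; each statement's English description precedes it below -/
import Mathlib

section
/- Let X be a real Banach space, let F : X → ℝ be locally Lipschitz at x̄ ∈ X, let (u, v) ∈ X × X, and let {t_k} be a sequence of positive reals converging to 0 and {v^k} a sequence in X converging to v such that F(x̄ + t_k u + ½ t_k² v^k) ≥ F(x̄) for all k ∈ ℕ. If F°(x̄, u) = 0, then F°(x̄, v) + F°°(x̄, u) ≥ 0. -/
/-!
Put `x_k = x̄ + t_k u` and `s_k = t_k² / 2`, so that `F x̄ ≤ F (x_k + s_k v^k)`. Replacing `v^k`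
by `v` costs at most `L s_k ‖v^k - v‖`, and since the base points `x_k → x̄` are admissible in the
limsup defining `F°(x̄, v)`, `F (x_k + s_k v) - F x_k ≤ s_k (F°(x̄, v) + o(1))`. Hence the
quotient `(F (x̄ + t_k u) - F x̄) / (t_k² / 2)` is at least `-F°(x̄, v) - o(1)`; as `F°(x̄, u) = 0`,
this is the quotient defining `F°°(x̄, u)`, sampled along `t_k ↓ 0`.
-/

open Filter Topology Set

/-- `F` is locally Lipschitz at `xbar`: Lipschitz on some neighborhood of `xbar`. -/
def LocallyLipschitzAt {X : Type*} [NormedAddCommGroup X] (F : X → ℝ) (xbar : X) : Prop :=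
  ∃ L : ℝ, 0 ≤ L ∧ ∃ U ∈ 𝓝 xbar, ∀ x ∈ U, ∀ y ∈ U, |F x - F y| ≤ L * ‖x - y‖

/-- The Clarke generalized directional derivative
`F°(xbar, u) = limsup_{x → xbar, t ↓ 0} (F(x + t u) - F x) / t`. -/
noncomputable def clarkeD {X : Type*} [NormedAddCommGroup X] [NormedSpace ℝ X]
    (F : X → ℝ) (xbar u : X) : ℝ :=
  Filter.limsup (fun p : X × ℝ => (F (p.1 + p.2 • u) - F p.1) / p.2)
    ((𝓝 xbar) ×ˢ (𝓝[>] (0:ℝ)))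

/-- The second-order upper generalized directional derivative
`F°°(xbar, u) = limsup_{t ↓ 0} (F(xbar + t u) - F xbar - t F°(xbar, u)) / (t²/2)`,
a value in the extended reals. -/
noncomputable def clarkeD2 {X : Type*} [NormedAddCommGroup X] [NormedSpace ℝ X]
    (F : X → ℝ) (xbar u : X) : EReal :=
  Filter.limsup
    (fun t : ℝ =>
      (((F (xbar + t • u) - F xbar - t * clarkeD F xbar u) / (t ^ 2 / 2) : ℝ) : EReal))
    (𝓝[>] (0:ℝ))

theorem Filter.Tendsto.add_smul_of_tendsto_zero {X : Type*} [NormedAddCommGroup X]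
    [NormedSpace ℝ X] {ι : Type*} {l : Filter ι} {x w : ι → X} {s : ι → ℝ} {a v : X}
    (hx : Tendsto x l (𝓝 a)) (hs : Tendsto s l (𝓝 0)) (hw : Tendsto w l (𝓝 v)) :
    Tendsto (fun i => x i + s i • w i) l (𝓝 a) := by
  simpa using hx.add (hs.smul hw)

namespace LocallyLipschitzAt

variable {X : Type*} [NormedAddCommGroup X] {F : X → ℝ} {xbar : X}

theorem exists_eventually_abs_sub_le (hF : LocallyLipschitzAt F xbar) :
    ∃ L : ℝ, ∀ᶠ p in 𝓝 (xbar, xbar), |F p.1 - F p.2| ≤ L * ‖p.1 - p.2‖ := by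
  obtain ⟨L, -, U, hU, hLip⟩ := hF
  refine ⟨L, ?_⟩
  rw [nhds_prod_eq]
  filter_upwards [prod_mem_prod hU hU] with p hp using hLip _ hp.1 _ hp.2

variable [NormedSpace ℝ X]

/-- Without this bound the real `limsup` defining `clarkeD` would be a junk value. -/
theorem isBoundedUnder_clarke_quotient (hF : LocallyLipschitzAt F xbar) (v : X) :
    IsBoundedUnder (· ≤ ·) (𝓝 xbar ×ˢ 𝓝[>] 0)
      (fun p : X × ℝ => (F (p.1 + p.2 • v) - F p.1) / p.2) := by
  obtain ⟨L, hL⟩ := hF.exists_eventually_abs_sub_le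
  have hstep : Tendsto (fun p : X × ℝ => p.1 + p.2 • v) (𝓝 xbar ×ˢ 𝓝[>] 0) (𝓝 xbar) :=
    tendsto_fst.add_smul_of_tendsto_zero (tendsto_snd.mono_right nhdsWithin_le_nhds)
      tendsto_const_nhds
  refine ⟨L * ‖v‖, eventually_map.2 ?_⟩
  filter_upwards [(hstep.prodMk_nhds tendsto_fst).eventually hL,
    prod_mem_prod univ_mem self_mem_nhdsWithin] with p hLip hpos
  rw [add_sub_cancel_left, norm_smul, Real.norm_of_nonneg hpos.2.le] at hLip
  rw [div_le_iff₀ hpos.2]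
  linarith [le_abs_self (F (p.1 + p.2 • v) - F p.1)]

theorem eventually_sub_le_mul_of_clarkeD_lt (hF : LocallyLipschitzAt F xbar) {v : X} {c : ℝ}
    (hc : clarkeD F xbar v < c) :
    ∀ᶠ p in 𝓝 xbar ×ˢ 𝓝[>] 0, F (p.1 + p.2 • v) - F p.1 ≤ p.2 * c := by
  filter_upwards [eventually_lt_of_limsup_lt hc (hF.isBoundedUnder_clarke_quotient v),
    prod_mem_prod univ_mem self_mem_nhdsWithin] with p hp hpos
  exact (div_le_iff₀' hpos.2).1 hp.le

theorem eventually_sub_le_mul_of_tendsto (hF : LocallyLipschitzAt F xbar) {v : X} {c : ℝ}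
    (hc : clarkeD F xbar v < c) {ι : Type*} {l : Filter ι} {x w : ι → X} {s : ι → ℝ}
    (hx : Tendsto x l (𝓝 xbar)) (hs : Tendsto s l (𝓝[>] 0)) (hw : Tendsto w l (𝓝 v)) :
    ∀ᶠ i in l, F (x i + s i • w i) - F (x i) ≤ s i * c := by
  obtain ⟨c', hc', hc'c⟩ := exists_between hc
  obtain ⟨L, hL⟩ := hF.exists_eventually_abs_sub_le
  have hs0 : Tendsto s l (𝓝 0) := hs.mono_right nhdsWithin_le_nhds
  have hpair := (hx.add_smul_of_tendsto_zero hs0 hw).prodMk_nhds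
    (hx.add_smul_of_tendsto_zero hs0 (tendsto_const_nhds (x := v)))
  have hclose : Tendsto (fun i => L * ‖w i - v‖) l (𝓝 0) := by
    simpa using ((hw.sub_const v).norm).const_mul L
  filter_upwards [(hx.prodMk hs).eventually (hF.eventually_sub_le_mul_of_clarkeD_lt hc'),
    hpair.eventually hL, hclose.eventually (ge_mem_nhds (sub_pos.2 hc'c)),
    hs.eventually self_mem_nhdsWithin] with i hquot hLip hLw hpos
  rw [add_sub_add_left_eq_sub, ← smul_sub, norm_smul, Real.norm_of_nonneg (le_of_lt hpos)]
    at hLip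
  calc F (x i + s i • w i) - F (x i)
      = (F (x i + s i • w i) - F (x i + s i • v)) + (F (x i + s i • v) - F (x i)) := by ring
    _ ≤ s i * (L * ‖w i - v‖) + s i * c' := by
        gcongr
        linarith [le_abs_self (F (x i + s i • w i) - F (x i + s i • v))]
    _ ≤ s i * (c - c') + s i * c' := by gcongr
    _ = s i * c := by ring

end LocallyLipschitzAt

theorem EReal.coe_le_limsup_of_frequently {α : Type*} {f : Filter α} {g : α → ℝ} {a : ℝ}
    (h : ∀ c < a, ∃ᶠ t in f, c ≤ g t) : (a : EReal) ≤ limsup (fun t => (g t : EReal)) f := by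
  refine le_of_forall_lt fun b hb => ?_
  obtain ⟨c, hbc, hca⟩ := EReal.exists_between_coe_real hb
  exact hbc.trans_le <| le_limsup_of_frequently_le' <|
    (h c (EReal.coe_lt_coe_iff.1 hca)).mono fun t ht => EReal.coe_le_coe_iff.2 ht

theorem clarke_second_order_nonneg_of_seq_general {X : Type*} [NormedAddCommGroup X] [NormedSpace ℝ X]
    (F : X → ℝ) (xbar u v : X)
    (hF : LocallyLipschitzAt F xbar)
    (tseq : ℕ → ℝ) (vseq : ℕ → X)
    (ht_pos : ∀ k, 0 < tseq k) (ht_lim : Tendsto tseq atTop (𝓝 0))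
    (hv_lim : Tendsto vseq atTop (𝓝 v))
    (hineq : ∀ k, F xbar ≤ F (xbar + tseq k • u + ((tseq k) ^ 2 / 2) • vseq k))
    (hc : clarkeD F xbar u = 0) :
    (0 : EReal) ≤ (clarkeD F xbar v : EReal) + clarkeD2 F xbar u := by
  have ht : Tendsto tseq atTop (𝓝[>] 0) :=
    tendsto_nhdsWithin_iff.2 ⟨ht_lim, Eventually.of_forall ht_pos⟩
  have hs : Tendsto (fun k => tseq k ^ 2 / 2) atTop (𝓝[>] 0) := by
    refine tendsto_nhdsWithin_iff.2 ⟨by simpa using (ht_lim.pow 2).div_const 2, ?_⟩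
    exact Eventually.of_forall fun k => by simp only [mem_Ioi]; have := ht_pos k; positivity
  have hx : Tendsto (fun k => xbar + tseq k • u) atTop (𝓝 xbar) :=
    tendsto_const_nhds.add_smul_of_tendsto_zero ht_lim tendsto_const_nhds
  have hlower : ((-clarkeD F xbar v : ℝ) : EReal) ≤ clarkeD2 F xbar u := by
    simp only [clarkeD2, hc, mul_zero, sub_zero]
    refine EReal.coe_le_limsup_of_frequently fun c hc => ht.frequently (Eventually.frequently ?_)
    filter_upwards [hF.eventually_sub_le_mul_of_tendsto (c := -c) (by linarith) hx hs hv_lim]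
      with k hk
    rw [le_div_iff₀ (by have := ht_pos k; positivity)]
    linarith [hineq k]
  calc (0 : EReal) = (clarkeD F xbar v : EReal) + ((-clarkeD F xbar v : ℝ) : EReal) := by
        rw [← EReal.coe_add, add_neg_cancel, EReal.coe_zero]
    _ ≤ (clarkeD F xbar v : EReal) + clarkeD2 F xbar u := add_le_add_right hlower _

/-- Lemma 2.2: if `F` is locally Lipschitz at `xbar`, `tseq` is a positive
sequence converging to `0`, `vseq → v`, `F (xbar + tseq k • u + ½ (tseq k)² • vseq k) ≥ F xbar`
for all `k`, and `F°(xbar, u) = 0`, then `F°(xbar, v) + F°°(xbar, u) ≥ 0`. -/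
theorem clarke_second_order_nonneg_of_seq {X : Type*} [NormedAddCommGroup X] [NormedSpace ℝ X]
    [CompleteSpace X] (F : X → ℝ) (xbar u v : X)
    (hF : LocallyLipschitzAt F xbar)
    (tseq : ℕ → ℝ) (vseq : ℕ → X)
    (ht_pos : ∀ k, 0 < tseq k) (ht_lim : Tendsto tseq atTop (𝓝 0))
    (hv_lim : Tendsto vseq atTop (𝓝 v))
    (hineq : ∀ k, F xbar ≤ F (xbar + tseq k • u + ((tseq k) ^ 2 / 2) • vseq k))
    (hc : clarkeD F xbar u = 0) :
    (0 : EReal) ≤ (clarkeD F xbar v : EReal) + clarkeD2 F xbar u :=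
  clarke_second_order_nonneg_of_seq_general F xbar u v hF tseq vseq ht_pos ht_lim hv_lim hineq hc
end

section
/- Let x̄ ∈ Q_0 and u ∈ X. If the Zangwill second-order constraint qualification (ZSCQ) holds at x̄ for the direction u, i.e., B(x̄; u) ⊂ cl A(x̄; u), then the Abadie second-order constraint qualification (ASCQ) holds at x̄ for the direction u, i.e., L²(Q_0; x̄, u) ⊂ T²(Q_0; x̄, u). -/
open Filter Topology Set

/-- The feasible set `Q₀ = {x : g j x ≤ 0 for all j}`. -/
def Q0set {X : Type*} {m : ℕ} (g : Fin m → X → ℝ) : Set X := {x | ∀ j, g j x ≤ 0}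

/-- `(a, b) ≤_lex (0, 0)` where the second component is an extended real. -/
def lexLe (a : ℝ) (b : EReal) : Prop := a < 0 ∨ (a = 0 ∧ b ≤ 0)

/-- `(a, b) <_lex (0, 0)` where the second component is an extended real. -/
def lexLt (a : ℝ) (b : EReal) : Prop := a < 0 ∨ (a = 0 ∧ b < 0)

/-- The set `L²(Q₀; xbar, u)`. -/
def L2Q0 {X : Type*} [NormedAddCommGroup X] [NormedSpace ℝ X] {m : ℕ}
    (g : Fin m → X → ℝ) (xbar u : X) : Set X :=
  {v | ∀ j, g j xbar = 0 →
    lexLe (clarkeD (g j) xbar u) ((clarkeD (g j) xbar v : EReal) + clarkeD2 (g j) xbar u)}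

/-- The set `L₀²(Q₀; xbar, u)`. -/
def L2Q0strict {X : Type*} [NormedAddCommGroup X] [NormedSpace ℝ X] {m : ℕ}
    (g : Fin m → X → ℝ) (xbar u : X) : Set X :=
  {v | ∀ j, g j xbar = 0 →
    lexLt (clarkeD (g j) xbar u) ((clarkeD (g j) xbar v : EReal) + clarkeD2 (g j) xbar u)}

/-- The set `L²(Q; xbar, u)`, where `Q = Q₀ ∩ {x : f i x ≤ f i xbar}`. -/
def L2Q {X : Type*} [NormedAddCommGroup X] [NormedSpace ℝ X] {p m : ℕ}
    (f : Fin p → X → ℝ) (g : Fin m → X → ℝ) (xbar u : X) : Set X :=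
  {v | (∀ i, lexLe (clarkeD (f i) xbar u)
          ((clarkeD (f i) xbar v : EReal) + clarkeD2 (f i) xbar u)) ∧
       (∀ j, g j xbar = 0 →
          lexLe (clarkeD (g j) xbar u)
            ((clarkeD (g j) xbar v : EReal) + clarkeD2 (g j) xbar u))}

/-- The second-order tangent set `T²(Ω; xbar, u)`. -/
def secondTangentSet {X : Type*} [NormedAddCommGroup X] [NormedSpace ℝ X]
    (Ω : Set X) (xbar u : X) : Set X :=
  {v | ∃ t : ℕ → ℝ, ∃ w : ℕ → X, (∀ k, 0 < t k) ∧ Tendsto t atTop (𝓝 0) ∧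
       Tendsto w atTop (𝓝 v) ∧ ∀ k, xbar + (t k) • u + ((t k) ^ 2 / 2) • w k ∈ Ω}

/-- The (contingent) tangent cone `T(Ω; xbar)`. -/
def tangentCone' {X : Type*} [NormedAddCommGroup X] [NormedSpace ℝ X]
    (Ω : Set X) (xbar : X) : Set X :=
  {d | ∃ t : ℕ → ℝ, ∃ w : ℕ → X, (∀ k, 0 < t k) ∧ Tendsto t atTop (𝓝 0) ∧
       Tendsto w atTop (𝓝 d) ∧ ∀ k, xbar + (t k) • w k ∈ Ω}

/-- The set `A(xbar; u)`. -/
def Aset {X : Type*} [NormedAddCommGroup X] [NormedSpace ℝ X] {m : ℕ}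
    (g : Fin m → X → ℝ) (xbar u : X) : Set X :=
  {v | ∀ j, g j xbar = 0 → clarkeD (g j) xbar u = 0 →
    ∃ δ > 0, ∀ t ∈ Set.Ioo (0:ℝ) δ, g j (xbar + t • u + (t ^ 2 / 2) • v) ≤ 0}

/-- The set `B(xbar; u)`. -/
def Bset {X : Type*} [NormedAddCommGroup X] [NormedSpace ℝ X] {m : ℕ}
    (g : Fin m → X → ℝ) (xbar u : X) : Set X :=
  {v | ∀ j, g j xbar = 0 → clarkeD (g j) xbar u = 0 →
    (clarkeD (g j) xbar v : EReal) + clarkeD2 (g j) xbar u ≤ 0}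

/-- `u` is a critical direction of (VP) at `xbar`. -/
def IsCriticalDir {X : Type*} [NormedAddCommGroup X] [NormedSpace ℝ X] {p m : ℕ}
    (f : Fin p → X → ℝ) (g : Fin m → X → ℝ) (xbar u : X) : Prop :=
  (∀ i, clarkeD (f i) xbar u ≤ 0) ∧ (∃ i, clarkeD (f i) xbar u = 0) ∧
  (∀ j, g j xbar = 0 → clarkeD (g j) xbar u ≤ 0)

/-!
A vector `v ∈ L²(Q₀; x̄, u)` lies in `B(x̄; u)`, hence is a limit of vectors `wₖ ∈ A(x̄; u)`.
Along each parabola `t ↦ x̄ + t u + ½ t² wₖ` every constraint stays feasible for small `t > 0`: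
the constraints in `J(x̄; u)` by definition of `A(x̄; u)`, the active ones with `g_j°(x̄, u) < 0`
because the Clarke derivative bounds the first-order decrease while the Lipschitz constant
controls the `t²` perturbation, and the inactive ones by continuity. Choosing `tₖ ↓ 0` on
these parabolas exhibits `v` as a second-order tangent vector.
-/

lemma tendsto_parabola_nhdsGT {X : Type*} [NormedAddCommGroup X] [NormedSpace ℝ X]
    (xbar u w : X) :
    Tendsto (fun t : ℝ => xbar + t • u + (t ^ 2 / 2) • w) (𝓝[>] 0) (𝓝 xbar) := by
  have hcont : Continuous fun t : ℝ => xbar + t • u + (t ^ 2 / 2) • w := by fun_prop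
  simpa using (hcont.tendsto 0).mono_left nhdsWithin_le_nhds

section ClarkeDerivative

variable {X : Type*} [NormedAddCommGroup X] [NormedSpace ℝ X] {F : X → ℝ} {xbar : X}

lemma LocallyLipschitzAt.isBoundedUnder_le_clarke_quotient (hF : LocallyLipschitzAt F xbar)
    (u : X) :
    IsBoundedUnder (· ≤ ·) (𝓝 xbar ×ˢ 𝓝[>] 0)
      (fun p : X × ℝ => (F (p.1 + p.2 • u) - F p.1) / p.2) := by
  obtain ⟨L, -, U, hU, hlip⟩ := hF
  have hshift : Tendsto (fun p : X × ℝ => p.1 + p.2 • u) (𝓝 xbar ×ˢ 𝓝[>] 0) (𝓝 xbar) := by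
    have hcont : Continuous fun p : X × ℝ => p.1 + p.2 • u := by fun_prop
    have hlim := hcont.tendsto (xbar, 0)
    rw [nhds_prod_eq] at hlim
    simpa using hlim.mono_left (Filter.prod_mono le_rfl nhdsWithin_le_nhds)
  refine ⟨L * ‖u‖, eventually_map.2 ?_⟩
  filter_upwards [tendsto_fst.eventually hU, hshift.eventually hU,
    tendsto_snd.eventually self_mem_nhdsWithin] with p hx hy (ht : 0 < p.2)
  rw [div_le_iff₀ ht]
  calc F (p.1 + p.2 • u) - F p.1 ≤ |F (p.1 + p.2 • u) - F p.1| := le_abs_self _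
    _ ≤ L * ‖p.1 + p.2 • u - p.1‖ := hlip _ hy _ hx
    _ = L * ‖u‖ * p.2 := by
      rw [add_sub_cancel_left, norm_smul, Real.norm_of_nonneg ht.le]; ring

lemma LocallyLipschitzAt.eventually_sub_lt_of_clarkeD_lt (hF : LocallyLipschitzAt F xbar)
    {u : X} {b : ℝ} (hb : clarkeD F xbar u < b) :
    ∀ᶠ t in 𝓝[>] (0:ℝ), F (xbar + t • u) - F xbar < b * t := by
  have hev := eventually_lt_of_limsup_lt hb (hF.isBoundedUnder_le_clarke_quotient u)
  have hpair : Tendsto (fun t : ℝ => (xbar, t)) (𝓝[>] 0) (𝓝 xbar ×ˢ 𝓝[>] 0) :=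
    tendsto_const_nhds.prodMk tendsto_id
  filter_upwards [hpair.eventually hev, self_mem_nhdsWithin] with t ht (htpos : 0 < t)
  rwa [div_lt_iff₀ htpos] at ht

lemma LocallyLipschitzAt.eventually_neg_of_clarkeD_neg (hF : LocallyLipschitzAt F xbar)
    (hx : F xbar ≤ 0) {u : X} (hu : clarkeD F xbar u < 0) (w : X) :
    ∀ᶠ t in 𝓝[>] (0:ℝ), F (xbar + t • u + (t ^ 2 / 2) • w) < 0 := by
  set c := clarkeD F xbar u
  have hdecr : ∀ᶠ t in 𝓝[>] (0:ℝ), F (xbar + t • u) - F xbar < c / 2 * t :=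
    hF.eventually_sub_lt_of_clarkeD_lt (by linarith)
  obtain ⟨L, -, U, hU, hlip⟩ := hF
  have hsmall : ∀ᶠ t in 𝓝[>] (0:ℝ), L * ‖w‖ * t < -c := by
    have hlim : Tendsto (fun t : ℝ => L * ‖w‖ * t) (𝓝[>] 0) (𝓝 0) := by
      simpa using ((continuous_const_mul (L * ‖w‖)).tendsto 0).mono_left nhdsWithin_le_nhds
    exact hlim.eventually_lt_const (by linarith)
  have hline : ∀ᶠ t in 𝓝[>] (0:ℝ), xbar + t • u ∈ U := by
    have hlim := tendsto_parabola_nhdsGT xbar u 0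
    simp only [smul_zero, add_zero] at hlim
    exact hlim.eventually hU
  filter_upwards [hdecr, hsmall, self_mem_nhdsWithin, hline,
    (tendsto_parabola_nhdsGT xbar u w).eventually hU] with t hdecr hsmall (ht : 0 < t) hline hcurve
  have hpert : F (xbar + t • u + (t ^ 2 / 2) • w) - F (xbar + t • u) ≤ L * ‖w‖ * t * t / 2 :=
    calc _ ≤ |F (xbar + t • u + (t ^ 2 / 2) • w) - F (xbar + t • u)| := le_abs_self _
      _ ≤ L * ‖xbar + t • u + (t ^ 2 / 2) • w - (xbar + t • u)‖ := hlip _ hcurve _ hline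
      _ = L * ‖w‖ * t * t / 2 := by
        rw [add_sub_cancel_left, norm_smul, Real.norm_of_nonneg (by positivity)]; ring
  nlinarith [mul_lt_mul_of_pos_right hsmall ht]

end ClarkeDerivative

section SecondOrderTangent

variable {X : Type*} [NormedAddCommGroup X] [NormedSpace ℝ X]

lemma mem_secondTangentSet_of_eventually {Ω : Set X} {xbar u v : X} {w : ℕ → X}
    (hw : Tendsto w atTop (𝓝 v))
    (hΩ : ∀ k, ∀ᶠ t in 𝓝[>] (0:ℝ), xbar + t • u + (t ^ 2 / 2) • w k ∈ Ω) :
    v ∈ secondTangentSet Ω xbar u := by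
  have hsel : ∀ k : ℕ, ∃ t ∈ Ioo (0:ℝ) (1 / (k + 1)), xbar + t • u + (t ^ 2 / 2) • w k ∈ Ω :=
    fun k => (Filter.Eventually.and (Ioo_mem_nhdsGT (by positivity)) (hΩ k)).exists
  choose t ht hmem using hsel
  exact ⟨t, w, fun k => (ht k).1, squeeze_zero (fun k => (ht k).1.le) (fun k => (ht k).2.le)
    tendsto_one_div_add_atTop_nhds_zero_nat, hw, hmem⟩

variable {m : ℕ} {g : Fin m → X → ℝ} {xbar u : X}

lemma L2Q0_subset_Bset : L2Q0 g xbar u ⊆ Bset g xbar u := fun _ hv j hj hzero =>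
  (hv j hj).elim (fun hneg => absurd hzero hneg.ne) And.right

lemma eventually_mem_Q0set_of_mem_Aset (hx : xbar ∈ Q0set g)
    (hg : ∀ j, g j xbar = 0 → LocallyLipschitzAt (g j) xbar)
    (hgc : ∀ j, g j xbar ≠ 0 → ContinuousAt (g j) xbar)
    (hu : ∀ j, g j xbar = 0 → clarkeD (g j) xbar u ≤ 0) {w : X} (hw : w ∈ Aset g xbar u) :
    ∀ᶠ t in 𝓝[>] (0:ℝ), xbar + t • u + (t ^ 2 / 2) • w ∈ Q0set g := by
  simp only [Q0set, mem_ofPred_eq, eventually_all]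
  intro j
  by_cases hj : g j xbar = 0
  · rcases (hu j hj).lt_or_eq with hneg | hzero
    · exact ((hg j hj).eventually_neg_of_clarkeD_neg hj.le hneg w).mono fun _ => le_of_lt
    · obtain ⟨δ, hδ, hfeas⟩ := hw j hj hzero
      exact eventually_of_mem (Ioo_mem_nhdsGT hδ) hfeas
  · have hneg : g j xbar < 0 := (hx j).lt_of_ne hj
    exact (((hgc j hj).tendsto.comp (tendsto_parabola_nhdsGT xbar u w)).eventually_lt_const
      hneg).mono fun _ => le_of_lt

end SecondOrderTangent

theorem zscq_implies_ascq_general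
    {X : Type*} [NormedAddCommGroup X] [NormedSpace ℝ X]
    {m : ℕ} (g : Fin m → X → ℝ) (xbar : X)
    (hx : xbar ∈ Q0set g)
    (hg : ∀ j, g j xbar = 0 → LocallyLipschitzAt (g j) xbar)
    (hgc : ∀ j, g j xbar ≠ 0 → ContinuousAt (g j) xbar)
    (u : X)
    (hZ : Bset g xbar u ⊆ closure (Aset g xbar u)) :
    L2Q0 g xbar u ⊆ secondTangentSet (Q0set g) xbar u := by
  intro v hv
  have hu : ∀ j, g j xbar = 0 → clarkeD (g j) xbar u ≤ 0 := fun j hj =>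
    (hv j hj).elim le_of_lt fun h => h.1.le
  obtain ⟨w, hwA, hwv⟩ := mem_closure_iff_seq_limit.1 (hZ (L2Q0_subset_Bset hv))
  exact mem_secondTangentSet_of_eventually hwv fun k =>
    eventually_mem_Q0set_of_mem_Aset hx hg hgc hu (hwA k)

/-- Proposition 3.1 (i), first implication: (ZSCQ) ⇒ (ASCQ). -/
theorem zscq_implies_ascq
    {X : Type*} [NormedAddCommGroup X] [NormedSpace ℝ X] [CompleteSpace X]
    {p m : ℕ} (f : Fin p → X → ℝ) (g : Fin m → X → ℝ) (xbar : X)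
    (hx : xbar ∈ Q0set g)
    (hf : ∀ i, LocallyLipschitzAt (f i) xbar)
    (hg : ∀ j, g j xbar = 0 → LocallyLipschitzAt (g j) xbar)
    (hgc : ∀ j, g j xbar ≠ 0 → ContinuousAt (g j) xbar)
    (u : X)
    (hZ : Bset g xbar u ⊆ closure (Aset g xbar u)) :
    L2Q0 g xbar u ⊆ secondTangentSet (Q0set g) xbar u :=
  zscq_implies_ascq_general g xbar hx hg hgc u hZ
end

section
/- Let x̄ ∈ Q_0 and u ∈ X. If the Mangasarian–Fromovitz second-order constraint qualification (MFSCQ) holds at x̄ for the direction u, i.e., L₀²(Q_0; x̄, u) ≠ ∅, then the Abadie second-order constraint qualification (ASCQ) holds at x̄ for the direction u, i.e., L²(Q_0; x̄, u) ⊂ T²(Q_0; x̄, u). -/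
open Filter Topology Set

/-!
For `w ∈ L₀²` and `v ∈ L²`, every direction `v + ε • (w - v)` with `0 < ε < 1` keeps each
constraint feasible along the parabola `t ↦ x̄ + t u + (t²/2)(v + ε (w - v))` for all small `t > 0`:
inactive constraints by continuity; active ones with `g°(x̄, u) < 0` because the first-order
decrease beats the Lipschitz error of size `t²`; active ones with `g°(x̄, u) = 0` because splitting
the second-order step into its `v`- and `w`-parts and estimating each increment by the Clarke
derivative gives the second-order rate `(1 - ε)(g°(v) + g°°(u)) + ε (g°(w) + g°°(u)) < 0`.
Letting `ε → 0` along a sequence puts `v` in `T²(Q₀; x̄, u)`.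
-/

theorem EReal.exists_real_ge_of_add_le_zero_of_add_lt_zero {a b : ℝ} {z : EReal}
    (ha : (a : EReal) + z ≤ 0) (hb : (b : EReal) + z < 0) :
    ∃ c : ℝ, z ≤ c ∧ a + c ≤ 0 ∧ b + c < 0 := by
  induction z using EReal.rec with
  | bot => exact ⟨min (-a) (-b - 1), bot_le, by linarith [min_le_left (-a) (-b - 1)],
      by linarith [min_le_right (-a) (-b - 1)]⟩
  | coe z => exact ⟨z, le_rfl, by exact_mod_cast ha, by exact_mod_cast hb⟩
  | top => simp at hb

section SecondOrder

variable {X : Type*} [NormedAddCommGroup X]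

theorem LocallyLipschitzAt.exists_eventually_abs_sub_le_s5 {F : X → ℝ} {xbar : X}
    (hF : LocallyLipschitzAt F xbar) {α : Type*} {l : Filter α} {x y : α → X}
    (hx : Tendsto x l (𝓝 xbar)) (hy : Tendsto y l (𝓝 xbar)) :
    ∃ L, 0 ≤ L ∧ ∀ᶠ a in l, |F (y a) - F (x a)| ≤ L * ‖y a - x a‖ := by
  obtain ⟨L, hL, U, hU, hlip⟩ := hF
  exact ⟨L, hL, ((hy.eventually hU).and (hx.eventually hU)).mono fun a h => hlip _ h.1 _ h.2⟩

variable [NormedSpace ℝ X]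

theorem tendsto_secondOrderCurve (x u d : X) :
    Tendsto (fun t : ℝ => x + t • u + (t ^ 2 / 2) • d) (𝓝[>] (0 : ℝ)) (𝓝 x) := by
  have hcont : Continuous fun t : ℝ => x + t • u + (t ^ 2 / 2) • d := by fun_prop
  simpa using (hcont.tendsto 0).mono_left nhdsWithin_le_nhds

theorem tendsto_const_mul_sq_half_nhdsGT {c : ℝ} (hc : 0 < c) :
    Tendsto (fun t : ℝ => c * (t ^ 2 / 2)) (𝓝[>] (0 : ℝ)) (𝓝[>] (0 : ℝ)) := by
  refine tendsto_nhdsWithin_iff.2 ⟨?_, ?_⟩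
  · have hcont : Continuous fun t : ℝ => c * (t ^ 2 / 2) := by fun_prop
    simpa using (hcont.tendsto 0).mono_left nhdsWithin_le_nhds
  · filter_upwards [self_mem_nhdsWithin] with t (ht : 0 < t)
    exact mul_pos hc (by positivity)

theorem LocallyLipschitzAt.isBoundedUnder_clarkeQuotient {F : X → ℝ} {xbar : X}
    (hF : LocallyLipschitzAt F xbar) (d : X) :
    IsBoundedUnder (· ≤ ·) (𝓝 xbar ×ˢ 𝓝[>] (0 : ℝ))
      (fun p : X × ℝ => (F (p.1 + p.2 • d) - F p.1) / p.2) := by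
  have hstep : Tendsto (fun p : X × ℝ => p.1 + p.2 • d) (𝓝 xbar ×ˢ 𝓝[>] (0 : ℝ)) (𝓝 xbar) := by
    have hsnd : Tendsto (fun p : X × ℝ => p.2) (𝓝 xbar ×ˢ 𝓝[>] (0 : ℝ)) (𝓝 0) :=
      tendsto_snd.mono_right nhdsWithin_le_nhds
    simpa using tendsto_fst.add (hsnd.smul_const d)
  obtain ⟨L, -, hlip⟩ := hF.exists_eventually_abs_sub_le_s5 tendsto_fst hstep
  refine isBoundedUnder_of_eventually_le (a := L * ‖d‖) ?_
  filter_upwards [hlip, (eventually_mem_nhdsWithin (a := (0 : ℝ)) (s := Ioi 0)).prod_inr _]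
    with p hp (hp2 : 0 < p.2)
  rw [add_sub_cancel_left, norm_smul, Real.norm_of_nonneg hp2.le] at hp
  rw [div_le_iff₀ hp2]
  linarith [le_abs_self (F (p.1 + p.2 • d) - F p.1)]

theorem LocallyLipschitzAt.eventually_sub_le_clarkeD {F : X → ℝ} {xbar : X}
    (hF : LocallyLipschitzAt F xbar) (d : X) {η : ℝ} (hη : 0 < η)
    {α : Type*} {l : Filter α} {x : α → X} {s : α → ℝ}
    (hx : Tendsto x l (𝓝 xbar)) (hs : Tendsto s l (𝓝[>] (0 : ℝ))) :
    ∀ᶠ a in l, F (x a + s a • d) - F (x a) ≤ s a * (clarkeD F xbar d + η) := by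
  have hev := eventually_lt_of_limsup_lt (lt_add_of_pos_right (clarkeD F xbar d) hη)
    (hF.isBoundedUnder_clarkeQuotient d)
  filter_upwards [(hx.prodMk hs).eventually hev, hs.eventually self_mem_nhdsWithin]
    with a ha (hsa : 0 < s a)
  rw [div_lt_iff₀ hsa] at ha
  linarith

theorem eventually_sub_le_of_clarkeD2_le {F : X → ℝ} {xbar u : X} {c η : ℝ} (hη : 0 < η)
    (hc : clarkeD2 F xbar u ≤ c) :
    ∀ᶠ t in 𝓝[>] (0 : ℝ),
      F (xbar + t • u) - F xbar - t * clarkeD F xbar u ≤ t ^ 2 / 2 * (c + η) := by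
  have hlt : clarkeD2 F xbar u < ((c + η : ℝ) : EReal) :=
    hc.trans_lt (EReal.coe_lt_coe_iff.2 (lt_add_of_pos_right c hη))
  filter_upwards [eventually_lt_of_limsup_lt hlt, self_mem_nhdsWithin] with t ht (ht0 : 0 < t)
  rw [EReal.coe_lt_coe_iff, div_lt_iff₀ (by positivity)] at ht
  linarith

theorem eventually_nonpos_of_clarkeD_neg {F : X → ℝ} {xbar u : X}
    (hF : LocallyLipschitzAt F xbar) (hF0 : F xbar = 0) (hu : clarkeD F xbar u < 0) (d : X) :
    ∀ᶠ t in 𝓝[>] (0 : ℝ), F (xbar + t • u + (t ^ 2 / 2) • d) ≤ 0 := by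
  set cu := clarkeD F xbar u
  have hfirst : ∀ᶠ t in 𝓝[>] (0 : ℝ), F (xbar + t • u) - F xbar ≤ t * (cu + -cu / 2) :=
    hF.eventually_sub_le_clarkeD u (by linarith) tendsto_const_nhds tendsto_id
  have hline : Tendsto (fun t : ℝ => xbar + t • u) (𝓝[>] (0 : ℝ)) (𝓝 xbar) := by
    simpa using tendsto_secondOrderCurve xbar u 0
  obtain ⟨L, hL, hlip⟩ := hF.exists_eventually_abs_sub_le_s5 hline (tendsto_secondOrderCurve xbar u d)
  have hsmall : Ioo (0 : ℝ) (-cu / (L * ‖d‖ + 1)) ∈ 𝓝[>] (0 : ℝ) :=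
    Ioo_mem_nhdsGT (div_pos (by linarith) (by positivity))
  filter_upwards [hfirst, hlip, hsmall] with t h1 h2 ⟨ht, htsmall⟩
  rw [add_sub_cancel_left, norm_smul, Real.norm_of_nonneg (by positivity)] at h2
  rw [lt_div_iff₀ (by positivity)] at htsmall
  have hquad : L * (t ^ 2 / 2 * ‖d‖) ≤ t * (-cu / 2) := by
    nlinarith [mul_nonneg hL (norm_nonneg d)]
  linarith [le_abs_self (F (xbar + t • u + (t ^ 2 / 2) • d) - F (xbar + t • u))]

theorem eventually_nonpos_of_clarkeD_eq_zero {F : X → ℝ} {xbar u v w : X}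
    (hF : LocallyLipschitzAt F xbar) (hF0 : F xbar = 0) (hu : clarkeD F xbar u = 0)
    {ε : ℝ} (hε0 : 0 < ε) (hε1 : ε < 1)
    (hv : (clarkeD F xbar v : EReal) + clarkeD2 F xbar u ≤ 0)
    (hw : (clarkeD F xbar w : EReal) + clarkeD2 F xbar u < 0) :
    ∀ᶠ t in 𝓝[>] (0 : ℝ), F (xbar + t • u + (t ^ 2 / 2) • (v + ε • (w - v))) ≤ 0 := by
  obtain ⟨c, hc, hvc, hwc⟩ := EReal.exists_real_ge_of_add_le_zero_of_add_lt_zero hv hw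
  set a := clarkeD F xbar v
  set b := clarkeD F xbar w
  set η := ε * -(b + c) / 4 with hη_def
  have hη : 0 < η := by have := mul_pos hε0 (neg_pos.2 hwc); positivity
  have hline : Tendsto (fun t : ℝ => xbar + t • u) (𝓝[>] (0 : ℝ)) (𝓝 xbar) := by
    simpa using tendsto_secondOrderCurve xbar u 0
  have hbase : Tendsto (fun t : ℝ => xbar + t • u + ((1 - ε) * (t ^ 2 / 2)) • v)
      (𝓝[>] (0 : ℝ)) (𝓝 xbar) :=
    (tendsto_secondOrderCurve xbar u ((1 - ε) • v)).congr fun t => by rw [smul_smul, mul_comm]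
  have hsecond := eventually_sub_le_of_clarkeD2_le hη hc
  have hvstep := hF.eventually_sub_le_clarkeD v hη hline
    (tendsto_const_mul_sq_half_nhdsGT (sub_pos.2 hε1))
  have hwstep := hF.eventually_sub_le_clarkeD w hη hbase (tendsto_const_mul_sq_half_nhdsGT hε0)
  filter_upwards [hsecond, hvstep, hwstep] with t h1 h2 h3
  rw [hF0, hu, mul_zero, sub_zero, sub_zero] at h1
  have hsplit : xbar + t • u + (t ^ 2 / 2) • (v + ε • (w - v))
      = xbar + t • u + ((1 - ε) * (t ^ 2 / 2)) • v + (ε * (t ^ 2 / 2)) • w := by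
    module
  have hrate : (c + η) + (1 - ε) * (a + η) + ε * (b + η) ≤ 0 := by
    nlinarith [mul_nonpos_of_nonneg_of_nonpos (sub_pos.2 hε1).le hvc, hη_def]
  rw [hsplit]
  nlinarith [mul_nonpos_of_nonneg_of_nonpos (by positivity : (0 : ℝ) ≤ t ^ 2 / 2) hrate]

theorem eventually_nonpos_of_lexLe_of_lexLt {F : X → ℝ} {xbar u v w : X}
    (hF : LocallyLipschitzAt F xbar) (hF0 : F xbar = 0)
    (hv : lexLe (clarkeD F xbar u) ((clarkeD F xbar v : EReal) + clarkeD2 F xbar u))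
    (hw : lexLt (clarkeD F xbar u) ((clarkeD F xbar w : EReal) + clarkeD2 F xbar u))
    {ε : ℝ} (hε0 : 0 < ε) (hε1 : ε < 1) :
    ∀ᶠ t in 𝓝[>] (0 : ℝ), F (xbar + t • u + (t ^ 2 / 2) • (v + ε • (w - v))) ≤ 0 := by
  rcases hw with hneg | ⟨hzero, hwlt⟩
  · exact eventually_nonpos_of_clarkeD_neg hF hF0 hneg _
  · rcases hv with hneg | ⟨-, hvle⟩
    · exact eventually_nonpos_of_clarkeD_neg hF hF0 hneg _
    · exact eventually_nonpos_of_clarkeD_eq_zero hF hF0 hzero hε0 hε1 hvle hwlt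

theorem mem_secondTangentSet_of_tendsto {Ω : Set X} {xbar u v : X} {w : ℕ → X}
    (hw : Tendsto w atTop (𝓝 v))
    (hΩ : ∀ k, ∀ᶠ t in 𝓝[>] (0 : ℝ), xbar + t • u + (t ^ 2 / 2) • w k ∈ Ω) :
    v ∈ secondTangentSet Ω xbar u := by
  have hex : ∀ k : ℕ, ∃ t, xbar + t • u + (t ^ 2 / 2) • w k ∈ Ω ∧ t ∈ Ioo 0 (1 / (k + 1 : ℝ)) :=
    fun k => ((hΩ k).and (Ioo_mem_nhdsGT Nat.one_div_pos_of_nat)).exists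
  choose t htΩ ht using hex
  refine ⟨t, w, fun k => (ht k).1, ?_, hw, htΩ⟩
  exact squeeze_zero (fun k => (ht k).1.le) (fun k => (ht k).2.le)
    tendsto_one_div_add_atTop_nhds_zero_nat

theorem eventually_mem_Q0set_of_mem_L2Q0 {m : ℕ} {g : Fin m → X → ℝ} {xbar u v w : X}
    (hx : xbar ∈ Q0set g)
    (hg : ∀ j, g j xbar = 0 → LocallyLipschitzAt (g j) xbar)
    (hgc : ∀ j, g j xbar ≠ 0 → ContinuousAt (g j) xbar)
    (hv : v ∈ L2Q0 g xbar u) (hw : w ∈ L2Q0strict g xbar u) {ε : ℝ} (hε0 : 0 < ε) (hε1 : ε < 1) :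
    ∀ᶠ t in 𝓝[>] (0 : ℝ), xbar + t • u + (t ^ 2 / 2) • (v + ε • (w - v)) ∈ Q0set g := by
  refine eventually_all.2 fun j => ?_
  by_cases hj : g j xbar = 0
  · exact eventually_nonpos_of_lexLe_of_lexLt (hg j hj) hj (hv j hj) (hw j hj) hε0 hε1
  · have hlt : g j xbar < 0 := (hx j).lt_of_ne hj
    exact (((hgc j hj).tendsto.comp (tendsto_secondOrderCurve _ _ _)).eventually_lt_const
      hlt).mono fun t => le_of_lt

end SecondOrder

theorem mfscq_implies_ascq_general
    {X : Type*} [NormedAddCommGroup X] [NormedSpace ℝ X]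
    {m : ℕ} (g : Fin m → X → ℝ) (xbar : X)
    (hx : xbar ∈ Q0set g)
    (hg : ∀ j, g j xbar = 0 → LocallyLipschitzAt (g j) xbar)
    (hgc : ∀ j, g j xbar ≠ 0 → ContinuousAt (g j) xbar)
    (u : X)
    (hMF : (L2Q0strict g xbar u).Nonempty) :
    L2Q0 g xbar u ⊆ secondTangentSet (Q0set g) xbar u := by
  obtain ⟨w, hw⟩ := hMF
  intro v hv
  have hε : ∀ k : ℕ, 0 < 1 / (k + 2 : ℝ) ∧ 1 / (k + 2 : ℝ) < 1 := fun k =>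
    ⟨by positivity, (div_lt_one (by positivity)).2 (by linarith [k.cast_nonneg (α := ℝ)])⟩
  have hε_lim : Tendsto (fun k : ℕ => 1 / (k + 2 : ℝ)) atTop (𝓝 0) :=
    (tendsto_one_div_add_atTop_nhds_zero_nat.comp (tendsto_add_atTop_nat 1)).congr fun k => by
      norm_num [add_assoc, one_add_one_eq_two]
  refine mem_secondTangentSet_of_tendsto (w := fun k => v + (1 / (k + 2 : ℝ)) • (w - v)) ?_
    fun k => eventually_mem_Q0set_of_mem_L2Q0 hx hg hgc hv hw (hε k).1 (hε k).2
  simpa using (tendsto_const_nhds (x := v)).add (hε_lim.smul_const (w - v))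

/-- Proposition 3.1 (ii): (MFSCQ) ⇒ (ASCQ). -/
theorem mfscq_implies_ascq
    {X : Type*} [NormedAddCommGroup X] [NormedSpace ℝ X] [CompleteSpace X]
    {p m : ℕ} (f : Fin p → X → ℝ) (g : Fin m → X → ℝ) (xbar : X)
    (hx : xbar ∈ Q0set g)
    (hf : ∀ i, LocallyLipschitzAt (f i) xbar)
    (hg : ∀ j, g j xbar = 0 → LocallyLipschitzAt (g j) xbar)
    (hgc : ∀ j, g j xbar ≠ 0 → ContinuousAt (g j) xbar)
    (u : X)
    (hMF : (L2Q0strict g xbar u).Nonempty) :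
    L2Q0 g xbar u ⊆ secondTangentSet (Q0set g) xbar u :=
  mfscq_implies_ascq_general g xbar hx hg hgc u hMF
end

section
/- If x̄ ∈ Q_0 is a local weak efficient solution of (VP) and the weak Abadie regularity condition (WARC) holds at x̄, i.e., L(Q; x̄) := L²(Q; x̄, 0) ⊂ T(Q_0; x̄), then there is no u ∈ X satisfying f_i°(x̄, u) < 0 for all i ∈ I and g_j°(x̄, u) ≤ 0 for all j ∈ J(x̄). -/
open Filter Topology Set

/-- `xbar` is a local weak efficient solution of (VP). -/
def LocalWeakEff {X : Type*} [NormedAddCommGroup X] {p m : ℕ}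
    (f : Fin p → X → ℝ) (g : Fin m → X → ℝ) (xbar : X) : Prop :=
  ∃ U ∈ 𝓝 xbar, ∀ x ∈ U, x ∈ Q0set g → ¬ (∀ i, f i x < f i xbar)

/-- `xbar` is a local Geoffrion properly efficient solution of (VP). -/
def LocalGeoffrionEff {X : Type*} [NormedAddCommGroup X] {p m : ℕ}
    (f : Fin p → X → ℝ) (g : Fin m → X → ℝ) (xbar : X) : Prop :=
  ∃ U ∈ 𝓝 xbar,
    (∀ x ∈ U, x ∈ Q0set g → (∀ i, f i x ≤ f i xbar) → (∀ i, f i x = f i xbar)) ∧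
    ∃ M > (0:ℝ), ∀ i, ∀ x ∈ U, x ∈ Q0set g → f i x < f i xbar →
      ∃ j, f j xbar < f j x ∧ (f i xbar - f i x) / (f j x - f j xbar) ≤ M

/-!
Along a tangent direction `u` of `Q₀` at `xbar` there are feasible points `xbar + t_k w_k` with
`t_k ↓ 0`, `w_k → u`. If every `f_i°(xbar, u) < 0`, the Clarke derivative bound gives
`f_i (xbar + t u) < f_i xbar` for small `t`, and the Lipschitz constant absorbs the perturbation
from `u` to `w_k`, so these feasible points strictly improve every objective, contradicting local
weak efficiency. Under (WARC) every solution of the system is such a tangent direction, since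
`L(Q; xbar)` is exactly its solution set.
-/

section

variable {X : Type*} [NormedAddCommGroup X] [NormedSpace ℝ X]

lemma clarkeD_zero_right (F : X → ℝ) (x : X) : clarkeD F x 0 = 0 := by
  simp [clarkeD]

lemma clarkeD2_zero_right (F : X → ℝ) (x : X) : clarkeD2 F x 0 = 0 := by
  simp [clarkeD2, clarkeD_zero_right]

lemma mem_L2Q_zero_iff {p m : ℕ} {f : Fin p → X → ℝ} {g : Fin m → X → ℝ} {x v : X} :
    v ∈ L2Q f g x 0 ↔
      (∀ i, clarkeD (f i) x v ≤ 0) ∧ ∀ j, g j x = 0 → clarkeD (g j) x v ≤ 0 := by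
  simp [L2Q, lexLe, clarkeD_zero_right, clarkeD2_zero_right]

lemma tendsto_add_smul_nhdsGT (x u : X) :
    Tendsto (fun q : X × ℝ => x + q.2 • q.1) (𝓝 u ×ˢ 𝓝[>] 0) (𝓝 x) := by
  have ht : Tendsto (fun q : X × ℝ => q.2) (𝓝 u ×ˢ 𝓝[>] 0) (𝓝 0) :=
    tendsto_snd.mono_right nhdsWithin_le_nhds
  simpa using tendsto_const_nhds.add (ht.smul tendsto_fst)

namespace LocallyLipschitzAt

variable {F : X → ℝ} {x : X}

lemma isBoundedUnder_diffQuot (hF : LocallyLipschitzAt F x) (u : X) :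
    IsBoundedUnder (· ≤ ·) (𝓝 x ×ˢ 𝓝[>] 0)
      (fun q : X × ℝ => (F (q.1 + q.2 • u) - F q.1) / q.2) := by
  obtain ⟨L, -, U, hU, hlip⟩ := hF
  have ht : Tendsto (fun q : X × ℝ => q.2) (𝓝 x ×ˢ 𝓝[>] 0) (𝓝 0) :=
    tendsto_snd.mono_right nhdsWithin_le_nhds
  have hshift : Tendsto (fun q : X × ℝ => q.1 + q.2 • u) (𝓝 x ×ˢ 𝓝[>] 0) (𝓝 x) := by
    simpa using tendsto_fst.add (ht.smul_const u)
  refine ⟨L * ‖u‖, eventually_map.2 ?_⟩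
  filter_upwards [tendsto_fst.eventually_mem hU, hshift.eventually_mem hU,
    tendsto_snd.eventually self_mem_nhdsWithin] with q hq hqu (ht : 0 < q.2)
  have hdiff := le_of_abs_le (hlip _ hqu _ hq)
  rw [add_sub_cancel_left, norm_smul, Real.norm_of_nonneg ht.le] at hdiff
  rw [div_le_iff₀ ht]
  linarith

lemma eventually_diffQuot_lt (hF : LocallyLipschitzAt F x) {u : X} {c : ℝ}
    (hc : clarkeD F x u < c) :
    ∀ᶠ t in 𝓝[>] (0 : ℝ), (F (x + t • u) - F x) / t < c :=
  (eventually_lt_of_limsup_lt hc (hF.isBoundedUnder_diffQuot u)).curry.self_of_nhds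

lemma eventually_lt_of_clarkeD_neg (hF : LocallyLipschitzAt F x) {u : X}
    (hc : clarkeD F x u < 0) :
    ∀ᶠ q : X × ℝ in 𝓝 u ×ˢ 𝓝[>] 0, F (x + q.2 • q.1) < F x := by
  set c := clarkeD F x u
  have hquot := hF.eventually_diffQuot_lt (show c < c / 2 by linarith)
  obtain ⟨L, -, U, hU, hlip⟩ := hF
  have hclose : ∀ᶠ w in 𝓝 u, L * ‖w - u‖ < -c / 2 := by
    have : Tendsto (fun w => L * ‖w - u‖) (𝓝 u) (𝓝 0) := by
      simpa using ((tendsto_id (x := 𝓝 u)).sub_const u).norm.const_mul L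
    exact this.eventually (gt_mem_nhds (by linarith))
  have hbase : ∀ᶠ t in 𝓝[>] (0 : ℝ), x + t • u ∈ U :=
    (tendsto_add_smul_nhdsGT x u).eventually_mem hU |>.curry.self_of_nhds
  filter_upwards [hclose.prod_mk (hquot.and (hbase.and self_mem_nhdsWithin)),
    (tendsto_add_smul_nhdsGT x u).eventually_mem hU]
    with ⟨w, t⟩ ⟨hw, hq, hxu, (ht : 0 < t)⟩ hxw
  have hstep := le_of_abs_le (hlip _ hxw _ hxu)
  rw [add_sub_add_left_eq_sub, ← smul_sub, norm_smul, Real.norm_of_nonneg ht.le] at hstep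
  rw [div_lt_iff₀ ht] at hq
  -- `F (x + t w) - F x < t L ‖w - u‖ + t c / 2 < 0`
  nlinarith

end LocallyLipschitzAt

lemma LocalWeakEff.notMem_tangentCone'_of_clarkeD_neg {p m : ℕ} {f : Fin p → X → ℝ}
    {g : Fin m → X → ℝ} {x u : X}
    (hweak : LocalWeakEff f g x) (hf : ∀ i, LocallyLipschitzAt (f i) x)
    (hu : ∀ i, clarkeD (f i) x u < 0) :
    u ∉ tangentCone' (Q0set g) x := by
  rintro ⟨t, w, ht0, ht, hw, hmem⟩
  obtain ⟨U, hU, hUeff⟩ := hweak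
  have hseq : Tendsto (fun k => (w k, t k)) atTop (𝓝 u ×ˢ 𝓝[>] 0) :=
    hw.prodMk (tendsto_nhdsWithin_iff.2 ⟨ht, .of_forall ht0⟩)
  have hdesc : ∀ᶠ q : X × ℝ in 𝓝 u ×ˢ 𝓝[>] 0,
      x + q.2 • q.1 ∈ U ∧ ∀ i, f i (x + q.2 • q.1) < f i x :=
    ((tendsto_add_smul_nhdsGT x u).eventually_mem hU).and
      (eventually_all.2 fun i => (hf i).eventually_lt_of_clarkeD_neg (hu i))
  obtain ⟨k, hkU, hkf⟩ := (hseq.eventually hdesc).exists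
  exact hUeff _ hkU (hmem k) hkf

end

theorem first_order_primal_kkt_general
    {X : Type*} [NormedAddCommGroup X] [NormedSpace ℝ X]
    {p m : ℕ} (f : Fin p → X → ℝ) (g : Fin m → X → ℝ) (xbar : X)
    (hf : ∀ i, LocallyLipschitzAt (f i) xbar)
    (hweak : LocalWeakEff f g xbar)
    (hWARC : L2Q f g xbar 0 ⊆ tangentCone' (Q0set g) xbar) :
    ¬ ∃ u : X, (∀ i, clarkeD (f i) xbar u < 0) ∧
        (∀ j, g j xbar = 0 → clarkeD (g j) xbar u ≤ 0) := by
  rintro ⟨u, hfu, hgu⟩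
  have hL : u ∈ L2Q f g xbar 0 := mem_L2Q_zero_iff.2 ⟨fun i => (hfu i).le, hgu⟩
  exact hweak.notMem_tangentCone'_of_clarkeD_neg hf hfu (hWARC hL)

/-- Theorem 4.1: if `xbar` is a local weak efficient solution of (VP) and
(WARC) holds at `xbar`, then the system `f_i°(xbar,u) < 0 (i ∈ I)`,
`g_j°(xbar,u) ≤ 0 (j ∈ J(xbar))` has no solution. -/
theorem first_order_primal_kkt
    {X : Type*} [NormedAddCommGroup X] [NormedSpace ℝ X] [CompleteSpace X]
    {p m : ℕ} (f : Fin p → X → ℝ) (g : Fin m → X → ℝ) (xbar : X)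
    (hx : xbar ∈ Q0set g)
    (hf : ∀ i, LocallyLipschitzAt (f i) xbar)
    (hg : ∀ j, g j xbar = 0 → LocallyLipschitzAt (g j) xbar)
    (hgc : ∀ j, g j xbar ≠ 0 → ContinuousAt (g j) xbar)
    (hweak : LocalWeakEff f g xbar)
    (hWARC : L2Q f g xbar 0 ⊆ tangentCone' (Q0set g) xbar) :
    ¬ ∃ u : X, (∀ i, clarkeD (f i) xbar u < 0) ∧
        (∀ j, g j xbar = 0 → clarkeD (g j) xbar u ≤ 0) :=
  first_order_primal_kkt_general f g xbar hf hweak hWARC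
end

section
/- Let Q_0 := {(x_1, x_2) ∈ ℝ² : |x_1| + x_2³ − x_1² ≤ 0}. Then the tangent cone to Q_0 at the origin is T(Q_0; (0,0)) = {(v_1, v_2) ∈ ℝ² : v_1 = 0 and v_2 ≤ 0}. -/
open Filter Topology Set

/-!
After division by `t > 0`, the condition `t • w ∈ Q₀` reads `|w₁| + t² w₂³ ≤ t w₁²`.
Letting `t → 0` along a tangent sequence forces `|w₁| → 0`; and once `t |w₁| ≤ 1` the
right-hand side is at most `|w₁|`, so `t² w₂³ ≤ 0`, i.e. `w₂ ≤ 0`. Conversely every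
`t • (0, v₂)` with `v₂ ≤ 0` lies in `Q₀`, so these directions are tangent along a ray.
-/

theorem mem_tangentCone'_of_forall_pos_smul_mem {X : Type*} [NormedAddCommGroup X]
    [NormedSpace ℝ X] {Ω : Set X} {xbar d : X} (h : ∀ t : ℝ, 0 < t → xbar + t • d ∈ Ω) :
    d ∈ tangentCone' Ω xbar :=
  ⟨fun k => 1 / (k + 1), fun _ => d, fun k => by positivity,
    tendsto_one_div_add_atTop_nhds_zero_nat, tendsto_const_nhds, fun k => h _ (by positivity)⟩

def Q₀ : Set (ℝ × ℝ) := {x | |x.1| + x.2 ^ 3 - x.1 ^ 2 ≤ 0}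

theorem smul_mem_Q₀_iff {t : ℝ} (ht : 0 < t) (w : ℝ × ℝ) :
    t • w ∈ Q₀ ↔ |w.1| + t ^ 2 * w.2 ^ 3 ≤ t * w.1 ^ 2 := by
  have hfactor : |t * w.1| + (t * w.2) ^ 3 - (t * w.1) ^ 2
      = t * (|w.1| + t ^ 2 * w.2 ^ 3 - t * w.1 ^ 2) := by
    rw [abs_mul, abs_of_pos ht]; ring
  change |t * w.1| + (t * w.2) ^ 3 - (t * w.1) ^ 2 ≤ 0 ↔ _
  rw [hfactor, ← sub_nonpos (b := t * w.1 ^ 2)]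
  exact ⟨fun h => nonpos_of_mul_nonpos_right h ht, mul_nonpos_of_nonneg_of_nonpos ht.le⟩

theorem smul_mem_Q₀ {t : ℝ} (ht : 0 ≤ t) {v : ℝ × ℝ} (hv₁ : v.1 = 0) (hv₂ : v.2 ≤ 0) :
    t • v ∈ Q₀ := by
  have hcube : (t * v.2) ^ 3 ≤ 0 :=
    Odd.pow_nonpos (by decide) (mul_nonpos_of_nonneg_of_nonpos ht hv₂)
  simpa [Q₀, hv₁] using hcube

theorem snd_nonpos_of_smul_mem_Q₀ {t : ℝ} (ht : 0 < t) {w : ℝ × ℝ} (hsmall : t * |w.1| ≤ 1)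
    (hw : t • w ∈ Q₀) : w.2 ≤ 0 := by
  rw [smul_mem_Q₀_iff ht] at hw
  have hquad : t * w.1 ^ 2 ≤ |w.1| :=
    calc t * w.1 ^ 2 = t * |w.1| * |w.1| := by rw [← sq_abs]; ring
      _ ≤ 1 * |w.1| := by gcongr
      _ = |w.1| := one_mul _
  have hcube : w.2 ^ 3 ≤ 0 := nonpos_of_mul_nonpos_right (a := t ^ 2) (by linarith) (by positivity)
  exact (Odd.pow_nonpos_iff (by decide)).1 hcube

section TangentSequence

variable {ι : Type*} {l : Filter ι} [l.NeBot] {t : ι → ℝ} {w : ι → ℝ × ℝ} {v : ℝ × ℝ}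

theorem fst_eq_zero_of_tendsto_smul_mem_Q₀ (ht : ∀ k, 0 < t k) (ht₀ : Tendsto t l (𝓝 0))
    (hw : Tendsto w l (𝓝 v)) (hQ : ∀ k, t k • w k ∈ Q₀) : v.1 = 0 := by
  have hw₁ := (continuous_fst.tendsto v).comp hw
  have hw₂ := (continuous_snd.tendsto v).comp hw
  have hbound : Tendsto (fun k => t k * (w k).1 ^ 2 - t k ^ 2 * (w k).2 ^ 3) l (𝓝 0) := by
    simpa using (ht₀.mul (hw₁.pow 2)).sub ((ht₀.pow 2).mul (hw₂.pow 3))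
  refine abs_nonpos_iff.1 (le_of_tendsto_of_tendsto' hw₁.abs hbound fun k => ?_)
  have := (smul_mem_Q₀_iff (ht k) _).1 (hQ k)
  simp only [Function.comp_apply]
  linarith

theorem snd_nonpos_of_tendsto_smul_mem_Q₀ (ht : ∀ k, 0 < t k) (ht₀ : Tendsto t l (𝓝 0))
    (hw : Tendsto w l (𝓝 v)) (hQ : ∀ k, t k • w k ∈ Q₀) : v.2 ≤ 0 := by
  have hw₁ := (continuous_fst.tendsto v).comp hw
  have hsmall : ∀ᶠ k in l, t k * |(w k).1| ≤ 1 := by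
    have : Tendsto (fun k => t k * |(w k).1|) l (𝓝 0) := by simpa using ht₀.mul hw₁.abs
    exact this.eventually (ge_mem_nhds one_pos)
  exact le_of_tendsto ((continuous_snd.tendsto v).comp hw)
    (hsmall.mono fun k hk => snd_nonpos_of_smul_mem_Q₀ (ht k) hk (hQ k))

end TangentSequence

/-- from Example 4.1: for
`Q₀ = {(x₁, x₂) : |x₁| + x₂³ - x₁² ≤ 0}`, the tangent cone at the origin is
`{(v₁, v₂) : v₁ = 0 and v₂ ≤ 0}`. -/
theorem tangentCone_example :
    tangentCone' {x : ℝ × ℝ | |x.1| + x.2 ^ 3 - x.1 ^ 2 ≤ 0} (0, 0) =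
      {v : ℝ × ℝ | v.1 = 0 ∧ v.2 ≤ 0} := by
  change tangentCone' Q₀ 0 = _
  ext v
  constructor
  · rintro ⟨t, w, ht, ht₀, hw, hmem⟩
    have hQ : ∀ k, t k • w k ∈ Q₀ := fun k => by simpa using hmem k
    exact ⟨fst_eq_zero_of_tendsto_smul_mem_Q₀ ht ht₀ hw hQ,
      snd_nonpos_of_tendsto_smul_mem_Q₀ ht ht₀ hw hQ⟩
  · rintro ⟨hv₁, hv₂⟩
    exact mem_tangentCone'_of_forall_pos_smul_mem fun t ht => by
      simpa using smul_mem_Q₀ ht.le hv₁ hv₂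
end
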